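/- Let M : U → ℂ be smooth on a punctured neighborhood U of 0 with M extending continuously to 0 and M(0) ≠ 0, and suppose lim_{z→0} z^k ∂^k M(z) = 0 for every k ≥ 1. Then lim_{z→0} z^n ∂^n log M(z) = 0 for every n ≥ 1. -/

import Mathlib

/-- The Wirtinger derivative `∂ = ∂/∂z = (1/2)(∂/∂x - i ∂/∂y)`. -/
noncomputable def wd (f : ℂ → ℂ) (z : ℂ) : ℂ :=
  (1 / 2) * (fderiv ℝ f z 1 - Complex.I * fderiv ℝ f z Complex.I)

/-- The conjugate Wirtinger derivative `∂̄ = ∂/∂z̄ = (1/2)(∂/∂x + i ∂/∂y)`. -/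
noncomputable def wdbar (f : ℂ → ℂ) (z : ℂ) : ℂ :=
  (1 / 2) * (fderiv ℝ f z 1 + Complex.I * fderiv ℝ f z Complex.I)

open Filter Topology

lemma wd_congr {f g : ℂ → ℂ} {z : ℂ} (h : f =ᶠ[𝓝 z] g) : wd f z = wd g z := by
  unfold wd; rw [h.fderiv_eq]

lemma wd_add {f g : ℂ → ℂ} {z : ℂ} (hf : DifferentiableAt ℝ f z)
    (hg : DifferentiableAt ℝ g z) :
    wd (fun w => f w + g w) z = wd f z + wd g z := by
  unfold wd
  rw [fderiv_fun_add hf hg]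
  simp only [ContinuousLinearMap.add_apply]
  ring

lemma wd_neg {f : ℂ → ℂ} {z : ℂ} :
    wd (fun w => -f w) z = -wd f z := by
  unfold wd
  rw [fderiv_fun_neg]
  simp only [ContinuousLinearMap.neg_apply]
  ring

lemma wd_mul {f g : ℂ → ℂ} {z : ℂ} (hf : DifferentiableAt ℝ f z)
    (hg : DifferentiableAt ℝ g z) :
    wd (fun w => f w * g w) z = f z * wd g z + g z * wd f z := by
  unfold wd
  rw [fderiv_fun_mul hf hg]
  simp only [ContinuousLinearMap.add_apply, ContinuousLinearMap.smul_apply, smul_eq_mul]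
  ring

lemma wd_inv {g : ℂ → ℂ} {z : ℂ} (hg : DifferentiableAt ℝ g z) (hz : g z ≠ 0) :
    wd (fun w => (g w)⁻¹) z = -(wd g z) / (g z) ^ 2 := by
  have h1 : HasFDerivAt (fun w : ℂ => w⁻¹)
      ((ContinuousLinearMap.smulRight (1 : ℂ →L[ℂ] ℂ) (-((g z) ^ 2)⁻¹)).restrictScalars ℝ)
      (g z) := ((hasDerivAt_inv hz).hasFDerivAt).restrictScalars ℝ
  have h2 : HasFDerivAt (fun w => (g w)⁻¹) _ z := h1.comp z hg.hasFDerivAt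
  unfold wd
  rw [h2.fderiv]
  simp only [ContinuousLinearMap.coe_comp', Function.comp_apply,
    ContinuousLinearMap.coe_restrictScalars', ContinuousLinearMap.smulRight_apply,
    ContinuousLinearMap.one_apply, smul_eq_mul]
  field_simp
  ring

lemma wd_exp_comp {L : ℂ → ℂ} {z : ℂ} (hL : DifferentiableAt ℝ L z) :
    wd (fun w => Complex.exp (L w)) z = Complex.exp (L z) * wd L z := by
  have h1 : HasFDerivAt Complex.exp
      ((ContinuousLinearMap.smulRight (1 : ℂ →L[ℂ] ℂ) (Complex.exp (L z))).restrictScalars ℝ)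
      (L z) := ((Complex.hasDerivAt_exp (L z)).hasFDerivAt).restrictScalars ℝ
  have h2 : HasFDerivAt (fun w => Complex.exp (L w)) _ z := h1.comp z hL.hasFDerivAt
  unfold wd
  rw [h2.fderiv]
  simp only [ContinuousLinearMap.coe_comp', Function.comp_apply,
    ContinuousLinearMap.coe_restrictScalars', ContinuousLinearMap.smulRight_apply,
    ContinuousLinearMap.one_apply, smul_eq_mul]
  ring

lemma contDiffOn_wd {f : ℂ → ℂ} {s : Set ℂ} (hs : IsOpen s) (hf : ContDiffOn ℝ (⊤ : ℕ∞) f s) :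
    ContDiffOn ℝ (⊤ : ℕ∞) (wd f) s := by
  have h1 : ContDiffOn ℝ (⊤ : ℕ∞) (fderiv ℝ f) s := hf.fderiv_of_isOpen hs (by simp)
  have h2 : ContDiffOn ℝ (⊤ : ℕ∞) (fun z => fderiv ℝ f z 1) s :=
    (ContinuousLinearMap.apply ℝ ℂ (1 : ℂ)).contDiff.comp_contDiffOn h1
  have h3 : ContDiffOn ℝ (⊤ : ℕ∞) (fun z => fderiv ℝ f z Complex.I) s :=
    (ContinuousLinearMap.apply ℝ ℂ (Complex.I : ℂ)).contDiff.comp_contDiffOn h1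
  exact contDiffOn_const.mul (h2.sub (contDiffOn_const.mul h3))

lemma contDiffOn_wd_iter {M : ℂ → ℂ} {s : Set ℂ} (hs : IsOpen s)
    (hM : ContDiffOn ℝ (⊤ : ℕ∞) M s) (k : ℕ) : ContDiffOn ℝ (⊤ : ℕ∞) (wd^[k] M) s := by
  induction k with
  | zero => exact hM
  | succ k ih =>
      rw [Function.iterate_succ_apply']
      exact contDiffOn_wd hs ih

/-- The weighted algebra generated by the expressions `∂^k M / M` (weight `k`). -/
inductive Good (M : ℂ → ℂ) : ℕ → (ℂ → ℂ) → Prop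
  | base (k : ℕ) (hk : 1 ≤ k) : Good M k (fun z => wd^[k] M z / M z)
  | add {n : ℕ} {f g : ℂ → ℂ} : Good M n f → Good M n g → Good M n (fun z => f z + g z)
  | neg {n : ℕ} {f : ℂ → ℂ} : Good M n f → Good M n (fun z => -f z)
  | mul {m n : ℕ} {f g : ℂ → ℂ} : Good M m f → Good M n g →
      Good M (m + n) (fun z => f z * g z)

lemma Good.contDiffOn {M : ℂ → ℂ} {s : Set ℂ} (hs : IsOpen s)
    (hM : ContDiffOn ℝ (⊤ : ℕ∞) M s) (hMne : ∀ z ∈ s, M z ≠ 0)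
    {n : ℕ} {f : ℂ → ℂ} (h : Good M n f) : ContDiffOn ℝ (⊤ : ℕ∞) f s := by
  induction h with
  | base k hk =>
      exact ((contDiffOn_wd_iter hs hM k).mul (hM.inv hMne)).congr
        (fun z _ => div_eq_mul_inv _ _)
  | add _ _ ih1 ih2 => exact ih1.add ih2
  | neg _ ih => exact ih.neg
  | mul _ _ ih1 ih2 => exact ih1.mul ih2

lemma Good.tendsto {M : ℂ → ℂ} (hcont : Tendsto M (𝓝[≠] (0:ℂ)) (𝓝 (M 0))) (hM0 : M 0 ≠ 0)
    (hMk : ∀ k : ℕ, 1 ≤ k →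
      Tendsto (fun z : ℂ => z ^ k * (wd^[k] M) z) (𝓝[≠] 0) (𝓝 0))
    {n : ℕ} {f : ℂ → ℂ} (h : Good M n f) :
    Tendsto (fun z : ℂ => z ^ n * f z) (𝓝[≠] 0) (𝓝 0) := by
  induction h with
  | base k hk =>
      have h1 := (hMk k hk).mul (hcont.inv₀ hM0)
      rw [zero_mul] at h1
      refine h1.congr (fun z => ?_)
      simp [div_eq_mul_inv]; ring
  | add _ _ ih1 ih2 =>
      have := ih1.add ih2
      rw [add_zero] at this
      exact this.congr (fun z => by ring)
  | neg _ ih =>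
      have := ih.neg
      rw [neg_zero] at this
      exact this.congr (fun z => by ring)
  | mul _ _ ih1 ih2 =>
      have := ih1.mul ih2
      rw [zero_mul] at this
      refine this.congr (fun z => ?_)
      rw [pow_add]; ring

lemma Good.wd_rep {M : ℂ → ℂ} {s : Set ℂ} (hs : IsOpen s)
    (hM : ContDiffOn ℝ (⊤ : ℕ∞) M s) (hMne : ∀ z ∈ s, M z ≠ 0)
    {n : ℕ} {f : ℂ → ℂ} (h : Good M n f) :
    ∃ g, Good M (n + 1) g ∧ ∀ z ∈ s, wd f z = g z := by
  have hdiff : ∀ {k : ℕ} {u : ℂ → ℂ}, Good M k u → ∀ z ∈ s, DifferentiableAt ℝ u z :=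
    fun hu z hz =>
      (((hu.contDiffOn hs hM hMne).contDiffAt (hs.mem_nhds hz)).differentiableAt (by simp))
  have hMdiff : ∀ z ∈ s, DifferentiableAt ℝ M z := fun z hz =>
    ((hM.contDiffAt (hs.mem_nhds hz)).differentiableAt (by simp))
  have hAdiff : ∀ (k : ℕ), ∀ z ∈ s, DifferentiableAt ℝ (wd^[k] M) z := fun k z hz =>
    (((contDiffOn_wd_iter hs hM k).contDiffAt (hs.mem_nhds hz)).differentiableAt (by simp))
  induction h with
  | base k hk =>
      refine ⟨fun z => wd^[k+1] M z / M z +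
        -((wd^[k] M z / M z) * (wd^[1] M z / M z)), ?_, ?_⟩
      · exact Good.add (Good.base (k+1) (by omega))
          (Good.neg (Good.mul (Good.base k hk) (Good.base 1 le_rfl)))
      · intro z hz
        have hfe : (fun w => wd^[k] M w / M w) = fun w => wd^[k] M w * (M w)⁻¹ :=
          funext fun w => div_eq_mul_inv _ _
        rw [hfe, wd_mul (g := fun w => (M w)⁻¹) (hAdiff k z hz)
          (((hM.inv hMne).contDiffAt (hs.mem_nhds hz)).differentiableAt (by simp)),
          wd_inv (hMdiff z hz) (hMne z hz)]
        rw [show wd (wd^[k] M) z = wd^[k+1] M z from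
          (congrFun (Function.iterate_succ_apply' wd k M) z).symm]
        have hMz := hMne z hz
        simp only [Function.iterate_one]
        field_simp
        ring
  | add h1 h2 ih1 ih2 =>
      obtain ⟨p, hp, hpe⟩ := ih1
      obtain ⟨q, hq, hqe⟩ := ih2
      refine ⟨fun z => p z + q z, Good.add hp hq, ?_⟩
      intro z hz
      rw [wd_add (hdiff h1 z hz) (hdiff h2 z hz), hpe z hz, hqe z hz]
  | neg h1 ih =>
      obtain ⟨p, hp, hpe⟩ := ih
      refine ⟨fun z => -p z, Good.neg hp, ?_⟩
      intro z hz
      rw [wd_neg, hpe z hz]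
  | @mul m k f₁ f₂ h1 h2 ih1 ih2 =>
      obtain ⟨p, hp, hpe⟩ := ih1
      obtain ⟨q, hq, hqe⟩ := ih2
      refine ⟨fun z => f₁ z * q z + f₂ z * p z, ?_, ?_⟩
      · have G1 := Good.mul h1 hq
        have G2 := Good.mul h2 hp
        have e1 : m + (k + 1) = m + k + 1 := by omega
        have e2 : k + (m + 1) = m + k + 1 := by omega
        rw [e1] at G1; rw [e2] at G2
        exact Good.add G1 G2
      · intro z hz
        rw [wd_mul (hdiff h1 z hz) (hdiff h2 z hz), hqe z hz, hpe z hz]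

theorem log_M_deriv_limit (U : Set ℂ) (hU : U ∈ 𝓝 (0 : ℂ)) (M L : ℂ → ℂ)
    (hsmooth : ContDiffOn ℝ (⊤ : ℕ∞) M (U \ {0}))
    (hcont : Tendsto M (𝓝[≠] 0) (𝓝 (M 0))) (hM0 : M 0 ≠ 0)
    (hL : ∀ z ∈ U \ {0}, Complex.exp (L z) = M z)
    (hLsmooth : ContDiffOn ℝ (⊤ : ℕ∞) L (U \ {0}))
    (hMk : ∀ k : ℕ, 1 ≤ k →
      Tendsto (fun z : ℂ => z ^ k * (wd^[k] M) z) (𝓝[≠] 0) (𝓝 0)) :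
    ∀ n : ℕ, 1 ≤ n →
      Tendsto (fun z : ℂ => z ^ n * (wd^[n] L) z) (𝓝[≠] 0) (𝓝 0) := by
  have hne : {z : ℂ | M z ≠ 0} ∈ 𝓝[≠] (0 : ℂ) := hcont.eventually_ne hM0
  obtain ⟨u, hu_open, hu0, hu_sub⟩ := mem_nhdsWithin.mp hne
  set s : Set ℂ := (interior U ∩ u) \ {0} with hs_def
  have hs_open : IsOpen s := (isOpen_interior.inter hu_open).sdiff isClosed_singleton
  have hsub : s ⊆ U \ {0} := fun z hz => ⟨interior_subset hz.1.1, hz.2⟩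
  have hMne : ∀ z ∈ s, M z ≠ 0 := fun z hz => hu_sub ⟨hz.1.2, hz.2⟩
  have hMs : ContDiffOn ℝ (⊤ : ℕ∞) M s := hsmooth.mono hsub
  have hLs : ContDiffOn ℝ (⊤ : ℕ∞) L s := hLsmooth.mono hsub
  have hs_mem : s ∈ 𝓝[≠] (0 : ℂ) := by
    have h1 : interior U ∩ u ∈ 𝓝 (0 : ℂ) :=
      (isOpen_interior.inter hu_open).mem_nhds ⟨mem_interior_iff_mem_nhds.mpr hU, hu0⟩
    exact diff_mem_nhdsWithin_compl h1 {0}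
  -- Step 1 : wd L = wd M / M on s
  have step1 : ∀ z ∈ s, wd L z = wd M z / M z := by
    intro z hz
    have hLd : DifferentiableAt ℝ L z :=
      ((hLs.contDiffAt (hs_open.mem_nhds hz)).differentiableAt (by simp))
    have h1 : M =ᶠ[𝓝 z] fun w => Complex.exp (L w) := by
      filter_upwards [hs_open.mem_nhds hz] with w hw
      exact (hL w (hsub hw)).symm
    have h2 : wd M z = Complex.exp (L z) * wd L z := by
      rw [wd_congr h1, wd_exp_comp hLd]
    rw [hL z (hsub hz)] at h2
    rw [eq_div_iff (hMne z hz), h2]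
    ring
  -- Step 2 : each iterated derivative of L is represented by a Good function
  have step2 : ∀ n : ℕ, 1 ≤ n → ∃ f, Good M n f ∧ ∀ z ∈ s, wd^[n] L z = f z := by
    intro n hn
    induction n, hn using Nat.le_induction with
    | base =>
        refine ⟨fun z => wd^[1] M z / M z, Good.base 1 le_rfl, ?_⟩
        intro z hz
        simp only [Function.iterate_one]
        exact step1 z hz
    | succ n hn ih =>
        obtain ⟨f, hf, hfe⟩ := ih
        obtain ⟨g, hg, hge⟩ := hf.wd_rep hs_open hMs hMne
        refine ⟨g, hg, ?_⟩
        intro z hz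
        rw [Function.iterate_succ_apply']
        have heq : wd^[n] L =ᶠ[𝓝 z] f := by
          filter_upwards [hs_open.mem_nhds hz] with w hw
          exact hfe w hw
        rw [wd_congr heq, hge z hz]
  intro n hn
  obtain ⟨f, hf, hfe⟩ := step2 n hn
  have ht := hf.tendsto hcont hM0 hMk
  refine ht.congr' ?_
  filter_upwards [hs_mem] with z hz
  rw [hfe z hz]
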